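/- For n ≥ 1, λ ∈ ℂ with λ ≠ 0, and 0 ≤ l ≤ n, the rank of (J_{n,λ}⁻¹ − (1/λ)·I_n)^l equals n − l; in particular (J_{n,λ}⁻¹ − (1/λ)·I_n)^l ≠ 0 for 0 ≤ l ≤ n−1 and (J_{n,λ}⁻¹ − (1/λ)·I_n)^n = 0. -/

import Mathlib

/-!
Writing `J = λ • 1 + M`, one has `J⁻¹ - λ⁻¹ • 1 = -λ⁻¹ • (J⁻¹ * M)`, and `J⁻¹` commutes with `M`.
Hence the `l`-th power is `(-λ⁻¹)^l • (J⁻¹^l * M^l)`, whose rank is that of `M^l`, since `J` is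
invertible (a unit plus a commuting nilpotent). The matrix `M^l` has its ones exactly at the
positions `(i, i + l)`: it contains the identity of size `n - l` as a submatrix and vanishes on the
first `l` columns, so its rank is `n - l`.
-/

open Matrix

/-- The `n × n` nilpotent Jordan block over `ℂ`: `1`s on the superdiagonal, `0` elsewhere. -/
def Mblock (n : ℕ) : Matrix (Fin n) (Fin n) ℂ :=
  Matrix.of fun i j => if (j : ℕ) = (i : ℕ) + 1 then 1 else 0

/-- The Jordan cell `J_{n,λ} = λ·I_n + M_n`. -/
def Jcell (n : ℕ) (lam : ℂ) : Matrix (Fin n) (Fin n) ℂ :=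
  lam • (1 : Matrix (Fin n) (Fin n) ℂ) + Mblock n

namespace Matrix

variable {n K : Type*} [Fintype n] [DecidableEq n] [Field K]

theorem pow_inv_sub_inv_smul_one {A N : Matrix n n K} {c : K} (hc : c ≠ 0)
    (hA : IsUnit A.det) (h : A = c • 1 + N) (l : ℕ) :
    (A⁻¹ - c⁻¹ • 1) ^ l = (-c⁻¹) ^ l • (A⁻¹ ^ l * N ^ l) := by
  have hN : N = A - c • 1 := eq_sub_of_add_eq' h.symm
  have hleft : A⁻¹ * N = 1 - c • A⁻¹ := by
    rw [hN, Matrix.mul_sub, nonsing_inv_mul _ hA, Matrix.mul_smul, Matrix.mul_one]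
  have hright : N * A⁻¹ = 1 - c • A⁻¹ := by
    rw [hN, Matrix.sub_mul, mul_nonsing_inv _ hA, Matrix.smul_mul, Matrix.one_mul]
  have hsub : A⁻¹ - c⁻¹ • 1 = (-c⁻¹) • (A⁻¹ * N) := by
    rw [hleft, smul_sub, smul_smul, neg_mul, inv_mul_cancel₀ hc]
    module
  rw [hsub, smul_pow, (show Commute A⁻¹ N from hleft.trans hright.symm).mul_pow]

theorem rank_pow_inv_sub_inv_smul_one {A N : Matrix n n K} {c : K} (hc : c ≠ 0)
    (hA : IsUnit A.det) (h : A = c • 1 + N) (l : ℕ) :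
    ((A⁻¹ - c⁻¹ • 1) ^ l).rank = (N ^ l).rank := by
  have hscalar : (-c⁻¹) ^ l ∈ nonZeroDivisors K :=
    mem_nonZeroDivisors_of_ne_zero (pow_ne_zero l (neg_ne_zero.2 (inv_ne_zero hc)))
  have hdet : IsUnit (A⁻¹ ^ l).det := by
    simpa only [det_pow] using (isUnit_nonsing_inv_det A hA).pow l
  rw [pow_inv_sub_inv_smul_one hc hA h, rank_smul_of_mem_nonZeroDivisors _ hscalar,
    rank_mul_eq_right_of_isUnit_det _ _ hdet]

end Matrix

theorem Mblock_pow_apply (n l : ℕ) (i j : Fin n) :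
    (Mblock n ^ l) i j = if (j : ℕ) = i + l then 1 else 0 := by
  induction l generalizing j with
  | zero => simp [one_apply, Fin.ext_iff, eq_comm]
  | succ l ih =>
    simp_rw [pow_succ, mul_apply, ih, Mblock, of_apply, ite_mul, one_mul, zero_mul]
    rw [Fin.sum_univ_eq_sum_range
      (fun k => if k = (i : ℕ) + l then (if (j : ℕ) = k + 1 then (1 : ℂ) else 0) else 0),
      Finset.sum_ite_eq']
    simp only [Finset.mem_range]
    have := j.isLt
    split_ifs <;> first | rfl | omega

theorem Mblock_pow_self (n : ℕ) : Mblock n ^ n = 0 := by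
  ext i j
  rw [Mblock_pow_apply, if_neg (by omega), Matrix.zero_apply]

theorem isUnit_det_Jcell (n : ℕ) {lam : ℂ} (hlam : lam ≠ 0) : IsUnit (Jcell n lam).det := by
  have hscalar : IsUnit (lam • (1 : Matrix (Fin n) (Fin n) ℂ)) := by
    simpa [Algebra.algebraMap_eq_smul_one] using
      hlam.isUnit.map (algebraMap ℂ (Matrix (Fin n) (Fin n) ℂ))
  rw [← isUnit_iff_isUnit_det]
  exact IsNilpotent.isUnit_add_left_of_commute ⟨n, Mblock_pow_self n⟩ hscalar
    ((Commute.one_right _).smul_right lam)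

theorem rank_Mblock_pow {n l : ℕ} (hl : l ≤ n) : (Mblock n ^ l).rank = n - l := by
  apply le_antisymm
  · have hcols : Mblock n ^ l =
        Mblock n ^ l * diagonal fun j : Fin n => if (j : ℕ) < l then 0 else 1 := by
      ext i j
      rw [mul_diagonal, Mblock_pow_apply]
      split_ifs with hdiag hcol
      · omega
      all_goals simp
    rw [hcols]
    refine (rank_mul_le_right _ _).trans_eq ?_
    simp only [rank_diagonal, ne_eq, ite_eq_left_iff, one_ne_zero, imp_false, not_not]
    rw [Fintype.card_subtype_compl, Fintype.card_subtype, Fin.card_filter_val_lt,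
      Fintype.card_fin, min_eq_right hl]
  · have hsub : (Mblock n ^ l).submatrix (fun k : Fin (n - l) => ⟨k, by omega⟩)
        (fun k : Fin (n - l) => ⟨k + l, by omega⟩) = 1 := by
      ext k k'
      simp [Mblock_pow_apply, one_apply, Fin.ext_iff, eq_comm]
    calc n - l = (1 : Matrix (Fin (n - l)) (Fin (n - l)) ℂ).rank := by simp
      _ ≤ _ := hsub ▸ rank_submatrix_le _ _ _

/-- For `λ ≠ 0` and `0 ≤ l ≤ n`, the rank of `(J_{n,λ}⁻¹ - (1/λ)·I)^l` is `n - l`;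
in particular it is nonzero for `l ≤ n - 1`, and it vanishes for `l = n`. -/
theorem Jcell_inv_sub_pow_rank (n : ℕ) (hn : 1 ≤ n) (lam : ℂ) (hlam : lam ≠ 0) :
    (∀ l : ℕ, l ≤ n →
        (((Jcell n lam)⁻¹ - lam⁻¹ • (1 : Matrix (Fin n) (Fin n) ℂ)) ^ l).rank = n - l) ∧
      (∀ l : ℕ, l ≤ n - 1 →
        ((Jcell n lam)⁻¹ - lam⁻¹ • (1 : Matrix (Fin n) (Fin n) ℂ)) ^ l ≠ 0) ∧
      ((Jcell n lam)⁻¹ - lam⁻¹ • (1 : Matrix (Fin n) (Fin n) ℂ)) ^ n = 0 := by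
  have hrank : ∀ l ≤ n,
      (((Jcell n lam)⁻¹ - lam⁻¹ • (1 : Matrix (Fin n) (Fin n) ℂ)) ^ l).rank = n - l :=
    fun l hl => by
      rw [rank_pow_inv_sub_inv_smul_one hlam (isUnit_det_Jcell n hlam) rfl, rank_Mblock_pow hl]
  refine ⟨hrank, fun l hl hzero => ?_, ?_⟩
  · have hrank_l := hrank l (by omega)
    rw [hzero, rank_zero] at hrank_l
    omega
  · rw [pow_inv_sub_inv_smul_one hlam (isUnit_det_Jcell n hlam) rfl, Mblock_pow_self,
      Matrix.mul_zero, smul_zero]
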